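/- arXiv:1106.0267 — 3 statements merged into one kernel-verified Lean document; each statement's English description precedes it below -/
import Mathlib

section
/- Let F : ℝ → (0,∞) be a strictly increasing continuous bijection of ℝ onto (0,∞). Suppose that for every p ∈ (0,1] there exists a real number x(p) such that p·F(x) = F(x − x(p)) for all x ∈ ℝ. Then there exist m > 0 and c ∈ ℝ such that F(x) = exp(m·(x − c)) for all x ∈ ℝ. -/
/-! Taking `p = F a / F 0` for `a ≤ 0`, the shift `x(p)` must equal `-a` (compare at `x = 0` and
use injectivity), so thinning invariance says `F (x + a) * F 0 = F a * F x`; replacing `a` by `-a`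
extends this to every `a`. Hence `x ↦ log (F x / F 0)` is a continuous additive map `ℝ → ℝ`, i.e.
`x ↦ m * x`, and `m > 0` because `F` is increasing. -/

open Real

lemma apply_add_mul_apply_zero_of_thinning_invariant {F : ℝ → ℝ} (hmono : StrictMono F)
    (hpos : ∀ x, 0 < F x) (hinv : ∀ p ∈ Set.Ioc (0 : ℝ) 1, ∃ xp, ∀ x, p * F x = F (x - xp))
    {a : ℝ} (ha : a ≤ 0) (x : ℝ) : F (x + a) * F 0 = F a * F x := by
  have hF0 := (hpos 0).ne'
  obtain ⟨xp, hxp⟩ := hinv (F a / F 0)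
    ⟨div_pos (hpos a) (hpos 0), div_le_one_of_le₀ (hmono.monotone ha) (hpos 0).le⟩
  have hshift : x - xp = x + a := by
    have h0 : F (0 - xp) = F a := by rw [← hxp 0, div_mul_cancel₀ _ hF0]
    linarith [hmono.injective h0]
  have hx := hxp x
  rw [hshift] at hx
  field_simp at hx
  linarith

lemma apply_add_mul_apply_zero_of_forall_nonpos {G₀ : Type*} [CommGroupWithZero G₀]
    {f : ℝ → G₀} (hf : ∀ x, f x ≠ 0)
    (h : ∀ a ≤ 0, ∀ x, f (x + a) * f 0 = f a * f x) (a x : ℝ) :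
    f (x + a) * f 0 = f a * f x := by
  rcases le_or_gt a 0 with ha | ha
  · exact h a ha x
  · have h₁ := h (-a) (by linarith) a
    have h₂ := h (-a) (by linarith) (x + a)
    simp only [add_neg_cancel, add_neg_cancel_right] at h₁ h₂
    refine mul_right_cancel₀ (hf (-a)) ?_
    calc f (x + a) * f 0 * f (-a) = f (-a) * f (x + a) * f 0 := by ac_rfl
      _ = f x * (f (-a) * f a) := by rw [← h₂, mul_assoc, ← h₁]
      _ = f a * f x * f (-a) := by ac_rfl

lemma eq_mul_exp_of_apply_add_mul_apply_zero {F : ℝ → ℝ} (hcont : Continuous F)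
    (hpos : ∀ x, 0 < F x) (h : ∀ a x, F (x + a) * F 0 = F a * F x) (x : ℝ) :
    F x = F 0 * exp (x * log (F 1 / F 0)) := by
  have hF0 := (hpos 0).ne'
  let G : ℝ →+ ℝ := AddMonoidHom.mk' (fun x => log (F x / F 0)) fun x y => by
    rw [← log_mul (div_pos (hpos x) (hpos 0)).ne' (div_pos (hpos y) (hpos 0)).ne']
    congr 1
    field_simp
    rw [add_comm, h]
  have hG : Continuous G := (hcont.div_const _).log fun x => (div_pos (hpos x) (hpos 0)).ne'
  have hlin : G x = x * G 1 := by simpa using map_real_smul G hG x 1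
  calc F x = F 0 * exp (G x) := by
        simp only [G, AddMonoidHom.mk'_apply]
        rw [exp_log (div_pos (hpos x) (hpos 0)), mul_div_cancel₀ _ hF0]
    _ = F 0 * exp (x * log (F 1 / F 0)) := by rw [hlin]; rfl

theorem pure_poisson_thinning_invariant_classification_general
    (F : ℝ → ℝ) (hmono : StrictMono F) (hcont : Continuous F)
    (hpos : ∀ x, 0 < F x)
    (hinv : ∀ p : ℝ, p ∈ Set.Ioc (0 : ℝ) 1 → ∃ xp : ℝ, ∀ x : ℝ,
      p * F x = F (x - xp)) :
    ∃ m : ℝ, 0 < m ∧ ∃ c : ℝ, ∀ x : ℝ, F x = Real.exp (m * (x - c)) := by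
  have hmul := apply_add_mul_apply_zero_of_forall_nonpos (fun x => (hpos x).ne')
    fun a ha => apply_add_mul_apply_zero_of_thinning_invariant hmono hpos hinv ha
  set m := log (F 1 / F 0)
  have hm : 0 < m := log_pos <| (one_lt_div (hpos 0)).mpr (hmono zero_lt_one)
  refine ⟨m, hm, -log (F 0) / m, fun x => ?_⟩
  rw [eq_mul_exp_of_apply_add_mul_apply_zero hcont hpos hmul x, mul_sub, mul_div_cancel₀ _ hm.ne',
    sub_neg_eq_add, add_comm, exp_add, exp_log (hpos 0), mul_comm m]

/-- Classification of the "pure" Poisson intensities invariant under thinning,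
stated via the cumulative function `F`: a strictly increasing continuous bijection
of `ℝ` onto `(0,∞)` such that for every `p ∈ (0,1]` there is a shift `x(p)` with
`p * F x = F (x - x p)` for all `x`, must be of the form `F x = exp (m * (x - c))`. -/
theorem pure_poisson_thinning_invariant_classification
    (F : ℝ → ℝ) (hmono : StrictMono F) (hcont : Continuous F)
    (hpos : ∀ x, 0 < F x)
    (hsurj : ∀ y : ℝ, 0 < y → ∃ x : ℝ, F x = y)
    (hinv : ∀ p : ℝ, p ∈ Set.Ioc (0 : ℝ) 1 → ∃ xp : ℝ, ∀ x : ℝ,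
      p * F x = F (x - xp)) :
    ∃ m : ℝ, 0 < m ∧ ∃ c : ℝ, ∀ x : ℝ, F x = Real.exp (m * (x - c)) :=
  pure_poisson_thinning_invariant_classification_general F hmono hcont hpos hinv
end

section
/- Let ξ = (ξ₁, ξ₂, …) satisfy ξ₁ ≥ ξ₂ ≥ … ≥ 0 and ∑ₙ ξₙ ≤ 1, set ξ₀ = 1 − ∑ₙ ξₙ, and suppose ξ ∈ Δ_∞, i.e. ξ₀ > 0 or ξₙ > 0 for infinitely many n. Let p ∈ (0,1) and let (B_k)_{k≥1} be i.i.d. Bernoulli(p) random variables on a probability space. Set Z' = p·ξ₀ + ∑_k B_k ξ_k. Then Z' > 0 almost surely, E[p·ξ₀ / Z'] ≥ ξ₀, and equality holds if and only if ξ₀ = 0 or ξ₀ = 1. -/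
open MeasureTheory ProbabilityTheory Filter Set

/-!
With `c = p ξ₀` and `X = ∑ B_k ξ_k`, the new dust is `f X` for the strictly convex
`f x = c / (c + x)` on `[0, ∞)`, and `E X = p ∑ ξ_k` gives `f (E X) = ξ₀`, so Jensen's
inequality is the claimed bound. Equality forces `X` to be a.s. constant, which fails as soon as
some `ξ_j > 0`: `X ≥ ξ_j` on `{B_j = 1}`, while on `{B_0 = ⋯ = B_{N-1} = 0}` the sum `X` is at most
a tail `∑_{k ≥ N} ξ_k < ξ_j`, and both events have positive probability. When `ξ₀ = 0`, some
`B_k` with `ξ_k > 0` is a.s. equal to `1`, since the probability that the first `n` of them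
all vanish is `(1 - p)^n`.
-/

lemma strictConvexOn_div_const_add {c : ℝ} (hc : 0 < c) :
    StrictConvexOn ℝ (Ici 0) fun x => c / (c + x) := by
  have hinv : StrictConvexOn ℝ (Ici 0) fun x : ℝ => (c + x) ^ (-1 : ℤ) :=
    ((strictConvexOn_zpow (by norm_num) (by norm_num)).translate_right c).subset
      (fun x hx => show 0 < c + x by linarith [mem_Ici.1 hx]) (convex_Ici 0)
  refine ⟨convex_Ici 0, fun x hx y hy hxy a b ha hb hab => ?_⟩
  have h := mul_lt_mul_of_pos_left (hinv.2 hx hy hxy ha hb hab) hc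
  simp only [smul_eq_mul, zpow_neg_one] at h ⊢
  simp only [div_eq_mul_inv]
  linarith

lemma continuousOn_div_const_add {c : ℝ} (hc : 0 < c) :
    ContinuousOn (fun x : ℝ => c / (c + x)) (Ici 0) :=
  continuousOn_const.div (by fun_prop) fun x (hx : 0 ≤ x) => by positivity

section Jensen

variable {Ω : Type*} [MeasurableSpace Ω] {P : Measure Ω} {X : Ω → ℝ} {c : ℝ}

lemma integrable_div_const_add [IsFiniteMeasure P] (hc : 0 < c) (hX : ∀ᵐ ω ∂P, 0 ≤ X ω)
    (hXm : AEMeasurable X P) : Integrable (fun ω => c / (c + X ω)) P := by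
  refine (integrable_const (1 : ℝ)).mono'
    (aemeasurable_const.div (aemeasurable_const.add hXm)).aestronglyMeasurable
    (hX.mono fun ω hω => ?_)
  rw [Real.norm_of_nonneg (by positivity), div_le_one (by positivity)]
  linarith

variable [IsProbabilityMeasure P]

lemma div_const_add_integral_le (hc : 0 < c) (hX : ∀ᵐ ω ∂P, 0 ≤ X ω) (hXi : Integrable X P) :
    c / (c + ∫ ω, X ω ∂P) ≤ ∫ ω, c / (c + X ω) ∂P := by
  simpa only [average_eq_integral] using
    (strictConvexOn_div_const_add hc).convexOn.map_average_le (continuousOn_div_const_add hc)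
      isClosed_Ici hX hXi (integrable_div_const_add hc hX hXi.aemeasurable)

lemma div_const_add_integral_lt (hc : 0 < c) (hX : ∀ᵐ ω ∂P, 0 ≤ X ω) (hXi : Integrable X P)
    (hXc : ∀ a, ¬ X =ᵐ[P] fun _ => a) :
    c / (c + ∫ ω, X ω ∂P) < ∫ ω, c / (c + X ω) ∂P := by
  simpa only [average_eq_integral] using
    ((strictConvexOn_div_const_add hc).ae_eq_const_or_map_average_lt
      (continuousOn_div_const_add hc) isClosed_Ici hX hXi
      (integrable_div_const_add hc hX hXi.aemeasurable)).resolve_left (hXc _)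

end Jensen

section Bernoulli

variable {Ω : Type*} [MeasurableSpace Ω] {P : Measure Ω} [IsProbabilityMeasure P]
  {B : ℕ → Ω → Bool} {p : ℝ}

lemma measure_eq_false {k : ℕ} (hBk : Measurable (B k))
    (hlaw : P {ω | B k ω = true} = ENNReal.ofReal p) :
    P {ω | B k ω = false} = 1 - ENNReal.ofReal p := by
  simp_rw [← Bool.not_eq_true, ← hlaw]
  exact prob_compl_eq_one_sub (hBk (measurableSet_singleton true))

lemma measure_biInter_eq_false (hB : ∀ k, Measurable (B k)) (hindep : iIndepFun B P)
    (hlaw : ∀ k, P {ω | B k ω = true} = ENNReal.ofReal p) (F : Finset ℕ) :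
    P (⋂ k ∈ F, {ω | B k ω = false}) = (1 - ENNReal.ofReal p) ^ F.card := by
  rw [hindep.meas_biInter (s := fun k => {ω | B k ω = false})
      fun k _ => ⟨{false}, measurableSet_singleton false, rfl⟩,
    Finset.prod_congr rfl fun k _ => measure_eq_false (hB k) (hlaw k), Finset.prod_const]

lemma ae_exists_eq_true_of_infinite (hB : ∀ k, Measurable (B k)) (hindep : iIndepFun B P)
    (hlaw : ∀ k, P {ω | B k ω = true} = ENNReal.ofReal p) (hp : 0 < p) {I : Set ℕ}
    (hI : I.Infinite) : ∀ᵐ ω ∂P, ∃ k ∈ I, B k ω = true := by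
  have hle : ∀ n : ℕ, P {ω | ¬∃ k ∈ I, B k ω = true} ≤ (1 - ENNReal.ofReal p) ^ n := by
    intro n
    obtain ⟨F, hFI, rfl⟩ := hI.exists_subset_card_eq n
    rw [← measure_biInter_eq_false hB hindep hlaw F]
    refine measure_mono fun ω hω => mem_iInter₂.2 fun k hk => ?_
    simpa using fun h => hω ⟨k, hFI hk, h⟩
  have hq : 1 - ENNReal.ofReal p < 1 :=
    ENNReal.sub_lt_self ENNReal.one_ne_top one_ne_zero (ENNReal.ofReal_pos.2 hp).ne'
  exact ae_iff.2 <|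
    le_antisymm (ge_of_tendsto' (ENNReal.tendsto_pow_atTop_nhds_zero_of_lt_one hq) hle) zero_le

end Bernoulli

lemma ite_mem_Icc {c : Prop} [Decidable c] {x : ℝ} (hx : 0 ≤ x) :
    (if c then x else 0) ∈ Icc 0 x := by
  split <;> simp [hx]

section ThinnedSum

variable {Ω : Type*} {B : ℕ → Ω → Bool} {ξ : ℕ → ℝ}

noncomputable def thinnedSum (ξ : ℕ → ℝ) (B : ℕ → Ω → Bool) (ω : Ω) : ℝ :=
  ∑' k, if B k ω then ξ k else 0

lemma summable_thinned (hξ : ∀ n, 0 ≤ ξ n) (hs : Summable ξ) (ω : Ω) :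
    Summable fun k => if B k ω then ξ k else 0 :=
  hs.of_nonneg_of_le (fun k => (ite_mem_Icc (hξ k)).1) fun k => (ite_mem_Icc (hξ k)).2

lemma thinnedSum_nonneg (hξ : ∀ n, 0 ≤ ξ n) (ω : Ω) : 0 ≤ thinnedSum ξ B ω :=
  tsum_nonneg fun k => (ite_mem_Icc (hξ k)).1

lemma thinnedSum_le_tsum (hξ : ∀ n, 0 ≤ ξ n) (hs : Summable ξ) (ω : Ω) :
    thinnedSum ξ B ω ≤ ∑' n, ξ n :=
  (summable_thinned hξ hs ω).tsum_le_tsum (fun k => (ite_mem_Icc (hξ k)).2) hs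

lemma le_thinnedSum (hξ : ∀ n, 0 ≤ ξ n) (hs : Summable ξ) {ω : Ω} {k : ℕ} (hk : B k ω = true) :
    ξ k ≤ thinnedSum ξ B ω := by
  simpa [hk, thinnedSum] using
    (summable_thinned (B := B) hξ hs ω).le_tsum k fun j _ => (ite_mem_Icc (hξ j)).1

lemma thinnedSum_le_tsum_nat_add (hξ : ∀ n, 0 ≤ ξ n) (hs : Summable ξ) {ω : Ω} {N : ℕ}
    (hN : ∀ k < N, B k ω = false) : thinnedSum ξ B ω ≤ ∑' k, ξ (k + N) := by
  have hhead : ∑ k ∈ Finset.range N, (if B k ω then ξ k else 0) = 0 :=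
    Finset.sum_eq_zero fun k hk => by simp [hN k (Finset.mem_range.1 hk)]
  rw [thinnedSum, ← (summable_thinned hξ hs ω).sum_add_tsum_nat_add N, hhead, zero_add]
  exact ((summable_nat_add_iff N).2 (summable_thinned hξ hs ω)).tsum_le_tsum
    (fun k => (ite_mem_Icc (hξ (k + N))).2) ((summable_nat_add_iff N).2 hs)

lemma ite_eq_true_eq_indicator (k : ℕ) (x : ℝ) :
    (fun ω => if B k ω then x else 0) = {ω | B k ω = true}.indicator fun _ => x := by
  ext ω; simp [indicator_apply]

variable [MeasurableSpace Ω] {P : Measure Ω} {p : ℝ}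

lemma measurable_thinnedSum (hB : ∀ k, Measurable (B k)) : Measurable (thinnedSum ξ B) :=
  Measurable.tsum fun k => Measurable.ite (hB k (measurableSet_singleton true))
    measurable_const measurable_const

lemma integrable_thinnedSum [IsFiniteMeasure P] (hB : ∀ k, Measurable (B k)) (hξ : ∀ n, 0 ≤ ξ n)
    (hs : Summable ξ) :
    Integrable (thinnedSum ξ B) P :=
  (integrable_const (∑' n, ξ n)).mono' (measurable_thinnedSum hB).aestronglyMeasurable <|
    ae_of_all _ fun ω => by
      rw [Real.norm_of_nonneg (thinnedSum_nonneg hξ ω)]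
      exact thinnedSum_le_tsum hξ hs ω

lemma integral_ite_eq_true (hB : ∀ k, Measurable (B k))
    (hlaw : ∀ k, P {ω | B k ω = true} = ENNReal.ofReal p) (hp : 0 ≤ p) (k : ℕ) (x : ℝ) :
    ∫ ω, (if B k ω then x else 0) ∂P = p * x := by
  rw [ite_eq_true_eq_indicator,
    integral_indicator_const (s := {ω | B k ω = true}) x (hB k (measurableSet_singleton true)),
    measureReal_def, hlaw k, ENNReal.toReal_ofReal hp, smul_eq_mul]

lemma integral_thinnedSum [IsFiniteMeasure P] (hB : ∀ k, Measurable (B k))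
    (hlaw : ∀ k, P {ω | B k ω = true} = ENNReal.ofReal p) (hp : 0 ≤ p) (hξ : ∀ n, 0 ≤ ξ n)
    (hs : Summable ξ) : ∫ ω, thinnedSum ξ B ω ∂P = p * ∑' n, ξ n := by
  have hnorm : ∀ k, ∫ ω, ‖if B k ω then ξ k else 0‖ ∂P = p * ξ k := fun k => by
    simp_rw [apply_ite norm, norm_zero, Real.norm_of_nonneg (hξ k)]
    exact integral_ite_eq_true hB hlaw hp k (ξ k)
  have hint : ∀ k, Integrable (fun ω => if B k ω then ξ k else 0) P := fun k => by
    rw [ite_eq_true_eq_indicator]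
    exact (integrable_const (ξ k)).indicator (hB k (measurableSet_singleton true))
  unfold thinnedSum
  rw [← integral_tsum_of_summable_integral_norm hint (by simpa only [hnorm] using hs.mul_left p)]
  simp_rw [integral_ite_eq_true hB hlaw hp, tsum_mul_left]

variable [IsProbabilityMeasure P]

lemma thinnedSum_not_ae_eq_const (hB : ∀ k, Measurable (B k)) (hindep : iIndepFun B P)
    (hlaw : ∀ k, P {ω | B k ω = true} = ENNReal.ofReal p) (hp : p ∈ Ioo 0 1)
    (hξ : ∀ n, 0 ≤ ξ n) (hs : Summable ξ) {j : ℕ} (hj : 0 < ξ j) (a : ℝ) :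
    ¬ thinnedSum ξ B =ᵐ[P] fun _ => a := by
  intro hconst
  obtain ⟨ω₀, hω₀, hω₀a⟩ := Measure.exists_mem_of_measure_ne_zero_of_ae (s := {ω | B j ω = true})
    (by simpa [hlaw j] using hp.1) (ae_restrict_of_ae hconst)
  obtain ⟨N, hN⟩ : ∃ N, ∑' k, ξ (k + N) < ξ j :=
    ((tendsto_sum_nat_add ξ).eventually (gt_mem_nhds hj)).exists
  obtain ⟨ω₁, hω₁, hω₁a⟩ :=
    Measure.exists_mem_of_measure_ne_zero_of_ae (s := ⋂ k ∈ Finset.range N, {ω | B k ω = false})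
      (by
        rw [measure_biInter_eq_false hB hindep hlaw]
        exact pow_ne_zero _ (tsub_pos_of_lt (ENNReal.ofReal_lt_one.2 hp.2)).ne')
      (ae_restrict_of_ae hconst)
  have h₀ : ξ j ≤ thinnedSum ξ B ω₀ := le_thinnedSum hξ hs hω₀
  have h₁ : thinnedSum ξ B ω₁ ≤ ∑' k, ξ (k + N) := thinnedSum_le_tsum_nat_add hξ hs fun k hk =>
    mem_iInter₂.1 hω₁ k (Finset.mem_range.2 hk)
  linarith [show thinnedSum ξ B ω₀ = a from hω₀a, show thinnedSum ξ B ω₁ = a from hω₁a]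

lemma ae_thinnedSum_pos (hB : ∀ k, Measurable (B k)) (hindep : iIndepFun B P)
    (hlaw : ∀ k, P {ω | B k ω = true} = ENNReal.ofReal p) (hp : 0 < p) (hξ : ∀ n, 0 ≤ ξ n)
    (hs : Summable ξ) (hinf : {n | 0 < ξ n}.Infinite) : ∀ᵐ ω ∂P, 0 < thinnedSum ξ B ω := by
  filter_upwards [ae_exists_eq_true_of_infinite hB hindep hlaw hp hinf] with ω ⟨k, hk, hBk⟩
  exact hk.trans_le (le_thinnedSum hξ hs hBk)

end ThinnedSum

theorem thinning_dust_increases_general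
    (ξ : ℕ → ℝ) (hnonneg : ∀ n, 0 ≤ ξ n)
    (hsummable : Summable ξ) (hsum : ∑' n, ξ n ≤ 1)
    (hinf : 0 < 1 - ∑' n, ξ n ∨ {n : ℕ | 0 < ξ n}.Infinite)
    (p : ℝ) (hp : p ∈ Set.Ioo (0 : ℝ) 1)
    (Ω : Type*) [MeasurableSpace Ω] (P : Measure Ω) [IsProbabilityMeasure P]
    (B : ℕ → Ω → Bool) (hBmeas : ∀ k, Measurable (B k))
    (hBindep : iIndepFun B P)
    (hBlaw : ∀ k, P {ω | B k ω = true} = ENNReal.ofReal p) :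
    (∀ᵐ ω ∂P, 0 < p * (1 - ∑' n, ξ n) + ∑' k, (if B k ω then ξ k else 0)) ∧
    (1 - ∑' n, ξ n) ≤
      ∫ ω, (p * (1 - ∑' n, ξ n)) /
        (p * (1 - ∑' n, ξ n) + ∑' k, (if B k ω then ξ k else 0)) ∂P ∧
    ((∫ ω, (p * (1 - ∑' n, ξ n)) /
        (p * (1 - ∑' n, ξ n) + ∑' k, (if B k ω then ξ k else 0)) ∂P
      = 1 - ∑' n, ξ n) ↔ (1 - ∑' n, ξ n = 0 ∨ 1 - ∑' n, ξ n = 1)) := by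
  change (∀ᵐ ω ∂P, 0 < _ + thinnedSum ξ B ω) ∧ _ ≤ ∫ ω, _ / (_ + thinnedSum ξ B ω) ∂P ∧
    ((∫ ω, _ / (_ + thinnedSum ξ B ω) ∂P = _) ↔ _)
  have hξ_eq_zero : ξ = 0 ↔ ∑' n, ξ n = 0 :=
    (hasSum_zero_iff_of_nonneg hnonneg).symm.trans hsummable.hasSum_iff
  rcases (sub_nonneg.2 hsum).eq_or_lt with hdust | hdust
  · rw [← hdust]
    simp only [mul_zero, zero_add, zero_div, integral_zero, le_refl, true_or, and_true]
    exact ae_thinnedSum_pos hBmeas hBindep hBlaw hp.1 hnonneg hsummable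
      (hinf.resolve_left (hdust ▸ lt_irrefl 0))
  have hc : 0 < p * (1 - ∑' n, ξ n) := mul_pos hp.1 hdust
  have hX : ∀ᵐ ω ∂P, 0 ≤ thinnedSum ξ B ω := ae_of_all _ (thinnedSum_nonneg hnonneg)
  have hXi : Integrable (thinnedSum ξ B) P := integrable_thinnedSum hBmeas hnonneg hsummable
  have hmean : p * (1 - ∑' n, ξ n) / (p * (1 - ∑' n, ξ n) + ∫ ω, thinnedSum ξ B ω ∂P)
      = 1 - ∑' n, ξ n := by
    rw [integral_thinnedSum hBmeas hBlaw hp.1.le hnonneg hsummable, ← mul_add, sub_add_cancel,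
      mul_one, mul_div_cancel_left₀ _ hp.1.ne']
  refine ⟨hX.mono fun ω hω => add_pos_of_pos_of_nonneg hc hω,
    hmean.symm.trans_le (div_const_add_integral_le hc hX hXi), fun heq => ?_, ?_⟩
  · by_contra hne
    obtain ⟨j, hj⟩ : ∃ j, ξ j ≠ 0 := by
      by_contra! hzero
      exact hne (.inr (by simp [hξ_eq_zero.1 (funext hzero)]))
    exact (div_const_add_integral_lt hc hX hXi (thinnedSum_not_ae_eq_const hBmeas hBindep hBlaw
      hp hnonneg hsummable ((hnonneg j).lt_of_ne' hj))).ne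
      (hmean.trans heq.symm)
  · rintro (h | h)
    · exact absurd h hdust.ne'
    · have hξ : ξ = 0 := hξ_eq_zero.2 (by linarith)
      simp [thinnedSum, hξ, hp.1.ne']

/-- Let `ξ ∈ Δ_∞` (a nonincreasing nonnegative sequence with sum at most `1`
which has positive dust `ξ₀ = 1 - ∑ ξₙ` or infinitely many positive entries),
let `p ∈ (0,1)` and `(B k)` be i.i.d. Bernoulli(p), and let
`Z' = p ξ₀ + ∑ₖ B_k ξ_k`.  Then `Z' > 0` a.s., `E[p ξ₀ / Z'] ≥ ξ₀`, and equality
holds iff `ξ₀ = 0` or `ξ₀ = 1`: the expected dust is non-decreasing under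
Bernoulli-`p` thinning, and constant only if the dust is `0` or `1`. -/
theorem thinning_dust_increases
    (ξ : ℕ → ℝ) (hanti : Antitone ξ) (hnonneg : ∀ n, 0 ≤ ξ n)
    (hsummable : Summable ξ) (hsum : ∑' n, ξ n ≤ 1)
    (hinf : 0 < 1 - ∑' n, ξ n ∨ {n : ℕ | 0 < ξ n}.Infinite)
    (p : ℝ) (hp : p ∈ Set.Ioo (0 : ℝ) 1)
    (Ω : Type*) [MeasurableSpace Ω] (P : Measure Ω) [IsProbabilityMeasure P]
    (B : ℕ → Ω → Bool) (hBmeas : ∀ k, Measurable (B k))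
    (hBindep : iIndepFun B P)
    (hBlaw : ∀ k, P {ω | B k ω = true} = ENNReal.ofReal p) :
    (∀ᵐ ω ∂P, 0 < p * (1 - ∑' n, ξ n) + ∑' k, (if B k ω then ξ k else 0)) ∧
    (1 - ∑' n, ξ n) ≤
      ∫ ω, (p * (1 - ∑' n, ξ n)) /
        (p * (1 - ∑' n, ξ n) + ∑' k, (if B k ω then ξ k else 0)) ∂P ∧
    ((∫ ω, (p * (1 - ∑' n, ξ n)) /
        (p * (1 - ∑' n, ξ n) + ∑' k, (if B k ω then ξ k else 0)) ∂P
      = 1 - ∑' n, ξ n) ↔ (1 - ∑' n, ξ n = 0 ∨ 1 - ∑' n, ξ n = 1)) :=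
  thinning_dust_increases_general ξ hnonneg hsummable hsum hinf p hp Ω P B hBmeas hBindep hBlaw
end

section
/- Let p ∈ (0,1). Let ξ = (ξ₁, ξ₂, …) be a random element of Δ_∞ and let (B_k)_{k≥1} be i.i.d. Bernoulli(p) random variables independent of ξ, all on a common probability space. Set ξ₀ = 1 − ∑ₙ ξₙ and Z' = p·ξ₀ + ∑_k B_k ξ_k, let K₁ < K₂ < … be the (almost surely well-defined) increasing enumeration of {k : B_k = 1}, and set ζₙ = ξ_{Kₙ}/Z' for n ≥ 1. If the law of ζ = (ζ₁, ζ₂, …) as a random element of [0,1]^ℕ equals the law of ξ, then ξ₀ ∈ {0,1} almost surely. -/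
/-!
Write `ξ₀` for the dust, `Z' = p ξ₀ + ∑ₖ B_k ξ_k` for the normaliser of the thinning and
`M = ∑ₖ ξ_k (B_k - p)`, so that `Z' = p + M`. The thinned sequence has dust `1 - (Z' - p ξ₀) / Z'`,
which is at least `p ξ₀ / Z'`, so invariance in law gives `E[p ξ₀ / Z'] ≤ E[ξ₀]`. Independence of
`ξ` and the `B_k` gives `E[ξ₀ M] = 0`, that is `E[ξ₀ Z' / p] = E[ξ₀]`. As `p / Z' + Z' / p ≥ 2` with
equality only at `Z' = p`, we get `M = 0` almost surely on `{ξ₀ > 0}`. Finally, independence also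
gives `E[ξ₀ M²] = p (1 - p) E[ξ₀ ∑ₖ ξ_k²]`, so almost surely `ξ₀ = 0` or `ξ = 0`, i.e. `ξ₀ = 1`.
-/

open MeasureTheory ProbabilityTheory Filter Topology Finset
open scoped ENNReal

theorem Nat.nth_eq_iff {p : ℕ → Prop} [DecidablePred p] {n m : ℕ} :
    nth p n = m ↔ p m ∧ count p m = n ∨ m = 0 ∧ ∀ k, p k → count p k ≠ n := by
  have hcard : (∃ k, p k ∧ count p k = n) ↔ ∀ hf : (Set.ofPred p).Finite, n < hf.toFinset.card :=
    ⟨fun ⟨k, hk, hkn⟩ hf => hkn ▸ count_lt_card hf hk, fun h => ⟨nth p n, nth_mem n h, count_nth h⟩⟩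
  have hzero (h : ¬ ∃ k, p k ∧ count p k = n) : nth p n = 0 := by
    obtain ⟨hf, hn⟩ := not_forall.1 (mt hcard.2 h)
    exact nth_of_card_le hf (not_lt.1 hn)
  constructor
  · rintro rfl
    by_cases h : ∃ k, p k ∧ count p k = n
    · exact Or.inl ⟨nth_mem n (hcard.1 h), count_nth (hcard.1 h)⟩
    · exact Or.inr ⟨hzero h, fun k hk hkn => h ⟨k, hk, hkn⟩⟩
  · rintro (⟨hm, rfl⟩ | ⟨rfl, h⟩)
    · exact nth_count hm
    · exact hzero fun ⟨k, hk, hkn⟩ => h k hk hkn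

theorem Nat.tsum_comp_nth {α : Type*} [AddCommMonoid α] [TopologicalSpace α] {p : ℕ → Prop}
    (hp : (Set.ofPred p).Infinite) (f : ℕ → α) :
    ∑' n, f (nth p n) = ∑' k, (Set.ofPred p).indicator f k := by
  have hsupp : Function.support ((Set.ofPred p).indicator f) ⊆ Set.range (nth p) :=
    range_nth_of_infinite hp ▸ Set.support_indicator_subset
  rw [← (nth_injective hp).tsum_eq hsupp]
  exact tsum_congr fun n => (Set.indicator_of_mem (nth_mem_of_infinite hp n) f).symm

structure IsSubstochastic (x : ℕ → ℝ) : Prop where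
  nonneg : ∀ k, 0 ≤ x k
  summable : Summable x
  tsum_le_one : ∑' k, x k ≤ 1

noncomputable def dust (x : ℕ → ℝ) : ℝ := 1 - ∑' n, x n

noncomputable def thinningNormalizer (p : ℝ) (x : ℕ → ℝ) (b : ℕ → Bool) : ℝ :=
  p * dust x + ∑' k, if b k then x k else 0

noncomputable def thinning (p : ℝ) (x : ℕ → ℝ) (b : ℕ → Bool) (n : ℕ) : ℝ :=
  x (Nat.nth (fun k => b k = true) n) / thinningNormalizer p x b

noncomputable def centeredIndicator {Ω : Type*} (p : ℝ) (B : ℕ → Ω → Bool) (ω : Ω) (k : ℕ) : ℝ :=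
  (if B k ω then 1 else 0) - p

namespace IsSubstochastic

variable {x : ℕ → ℝ} {p : ℝ} {b : ℕ → Bool}

theorem sum_range_le_one (hx : IsSubstochastic x) (n : ℕ) : ∑ k ∈ range n, x k ≤ 1 :=
  (hx.summable.sum_le_tsum _ fun k _ => hx.nonneg k).trans hx.tsum_le_one

theorem le_one (hx : IsSubstochastic x) (k : ℕ) : x k ≤ 1 :=
  (hx.summable.le_tsum k fun j _ => hx.nonneg j).trans hx.tsum_le_one

theorem norm_le_one (hx : IsSubstochastic x) (k : ℕ) : ‖x k‖ ≤ 1 := by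
  rw [Real.norm_of_nonneg (hx.nonneg k)]
  exact hx.le_one k

theorem norm_tsum_le_one (hx : IsSubstochastic x) : ‖∑' k, x k‖ ≤ 1 := by
  rw [Real.norm_of_nonneg (tsum_nonneg hx.nonneg)]
  exact hx.tsum_le_one

theorem sq (hx : IsSubstochastic x) : IsSubstochastic fun k => x k ^ 2 := by
  have hle (k : ℕ) : x k ^ 2 ≤ x k := by nlinarith [hx.nonneg k, hx.le_one k]
  have hsum : Summable fun k => x k ^ 2 := hx.summable.of_nonneg_of_le (fun k => sq_nonneg _) hle
  exact ⟨fun k => sq_nonneg _, hsum, (hsum.tsum_le_tsum hle hx.summable).trans hx.tsum_le_one⟩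

theorem norm_sum_range_mul_le_one (hx : IsSubstochastic x) {e : ℕ → ℝ} (he : ∀ k, ‖e k‖ ≤ 1)
    (n : ℕ) : ‖∑ k ∈ range n, x k * e k‖ ≤ 1 := by
  refine (norm_sum_le _ _).trans (le_trans (sum_le_sum fun k _ => ?_) (hx.sum_range_le_one n))
  simpa [Real.norm_of_nonneg (hx.nonneg k)] using norm_mul_le_of_le (le_refl ‖x k‖) (he k)

theorem summable_mul (hx : IsSubstochastic x) {e : ℕ → ℝ} (he : ∀ k, ‖e k‖ ≤ 1) :
    Summable fun k => x k * e k :=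
  hx.summable.of_norm_bounded fun k => by
    simpa [Real.norm_of_nonneg (hx.nonneg k)] using norm_mul_le_of_le (le_refl ‖x k‖) (he k)

theorem summable_ite (hx : IsSubstochastic x) (b : ℕ → Bool) :
    Summable fun k => if b k then x k else 0 :=
  hx.summable.of_nonneg_of_le (fun k => ite_nonneg (hx.nonneg k) le_rfl)
    (fun k => by split_ifs <;> simp [hx.nonneg k])

theorem dust_nonneg (hx : IsSubstochastic x) : 0 ≤ dust x :=
  sub_nonneg.2 hx.tsum_le_one

theorem norm_dust_le_one (hx : IsSubstochastic x) : ‖dust x‖ ≤ 1 := by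
  rw [Real.norm_of_nonneg hx.dust_nonneg, dust, sub_le_self_iff]
  exact tsum_nonneg hx.nonneg

theorem mul_dust_le_thinningNormalizer (hx : IsSubstochastic x) :
    p * dust x ≤ thinningNormalizer p x b :=
  le_add_of_nonneg_right (tsum_nonneg fun k => ite_nonneg (hx.nonneg k) le_rfl)

theorem thinningNormalizer_nonneg (hx : IsSubstochastic x) (hp : 0 ≤ p) :
    0 ≤ thinningNormalizer p x b :=
  (mul_nonneg hp hx.dust_nonneg).trans hx.mul_dust_le_thinningNormalizer

theorem norm_thinningNormalizer_le_one (hx : IsSubstochastic x) (hp₀ : 0 ≤ p) (hp₁ : p ≤ 1) :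
    ‖thinningNormalizer p x b‖ ≤ 1 := by
  rw [Real.norm_of_nonneg (hx.thinningNormalizer_nonneg hp₀)]
  have hW : ∑' k, (if b k then x k else 0) ≤ ∑' k, x k :=
    (hx.summable_ite b).tsum_le_tsum (fun k => by split_ifs <;> simp [hx.nonneg k]) hx.summable
  have := mul_le_of_le_one_left hx.dust_nonneg hp₁
  unfold thinningNormalizer dust at *
  linarith

theorem thinningNormalizer_eq_add_tsum (hx : IsSubstochastic x) :
    thinningNormalizer p x b = p + ∑' k, x k * ((if b k then 1 else 0) - p) := by
  have hite : ∀ k, x k * ((if b k then 1 else 0) - p) = (if b k then x k else 0) - p * x k :=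
    fun k => by split_ifs <;> ring
  rw [tsum_congr hite, (hx.summable_ite b).tsum_sub (hx.summable.mul_left p), tsum_mul_left,
    thinningNormalizer, dust]
  ring

-- Equality holds unless the normaliser vanishes, where `x / 0 = 0` makes the thinning zero.
theorem mul_dust_div_le_dust_thinning (hx : IsSubstochastic x) (hp : 0 ≤ p)
    (hb : {k | b k = true}.Infinite) :
    p * dust x / thinningNormalizer p x b ≤ dust (thinning p x b) := by
  have hthin :
      ∑' n, thinning p x b n = (∑' k, if b k then x k else 0) / thinningNormalizer p x b := by
    simp only [thinning]
    rw [tsum_div_const, Nat.tsum_comp_nth hb]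
    simp [Set.indicator_apply]
  have hZ := hx.thinningNormalizer_nonneg (b := b) hp
  rw [show dust (thinning p x b) = 1 - ∑' n, thinning p x b n from rfl, hthin]
  rcases hZ.eq_or_lt with h | h
  · simp [← h]
  · rw [le_sub_iff_add_le, ← add_div, div_le_one h, thinningNormalizer]

theorem dust_eq_zero_or_one_of_mul_tsum_sq_eq_zero (hx : IsSubstochastic x)
    (h : dust x * ∑' k, x k ^ 2 = 0) : dust x = 0 ∨ dust x = 1 := by
  refine (mul_eq_zero.1 h).imp id fun hsq => ?_
  have hsq_zero := (hasSum_zero_iff_of_nonneg hx.sq.nonneg).1 (hsq ▸ hx.sq.summable.hasSum)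
  have hzero (k : ℕ) : x k = 0 := pow_eq_zero_iff two_ne_zero |>.1 (congrFun hsq_zero k)
  simp [dust, hzero]

end IsSubstochastic

theorem norm_centeredIndicator_le_one {Ω : Type*} {p : ℝ} {B : ℕ → Ω → Bool} (hp₀ : 0 ≤ p)
    (hp₁ : p ≤ 1) (ω : Ω) (k : ℕ) : ‖centeredIndicator p B ω k‖ ≤ 1 := by
  rw [centeredIndicator, Real.norm_eq_abs, abs_le]
  constructor <;> split_ifs <;> linarith

section Measurability

variable {Ω : Type*} [MeasurableSpace Ω] {p : ℝ} {ξ : Ω → ℕ → ℝ} {B : ℕ → Ω → Bool}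

theorem measurable_count (hB : ∀ k, Measurable (B k)) (m : ℕ) :
    Measurable fun ω => Nat.count (fun k => B k ω = true) m := by
  induction m with
  | zero => simp
  | succ m ih =>
    simp only [Nat.count_succ]
    exact ih.add <|
      Measurable.ite (hB m (measurableSet_singleton true)) measurable_const measurable_const

theorem measurable_nth (hB : ∀ k, Measurable (B k)) (n : ℕ) :
    Measurable fun ω => Nat.nth (fun k => B k ω = true) n := by
  refine measurable_to_countable' fun m => measurableSet_setOfPred.2 ?_
  simp only [Set.mem_singleton_iff, Nat.nth_eq_iff]
  have hBk (k : ℕ) : Measurable fun ω => B k ω = true :=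
    measurableSet_setOfPred.1 (hB k (measurableSet_singleton true))
  have hcount (k : ℕ) : Measurable fun ω => Nat.count (fun k => B k ω = true) k = n :=
    measurableSet_setOfPred.1 (measurable_count hB k (measurableSet_singleton n))
  fun_prop

theorem measurable_dust : Measurable dust :=
  measurable_const.sub (Measurable.tsum measurable_pi_apply)

theorem measurable_thinningNormalizer (hξ : Measurable ξ) (hB : ∀ k, Measurable (B k)) :
    Measurable fun ω => thinningNormalizer p (ξ ω) (fun k => B k ω) := by
  have hite (k : ℕ) : Measurable fun ω => if B k ω then ξ ω k else 0 :=
    Measurable.ite (hB k (measurableSet_singleton true)) (measurable_pi_apply k |>.comp hξ)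
      measurable_const
  exact (measurable_const.mul (measurable_dust.comp hξ)).add (Measurable.tsum hite)

theorem measurable_thinning (hξ : Measurable ξ) (hB : ∀ k, Measurable (B k)) :
    Measurable fun ω => thinning p (ξ ω) (fun k => B k ω) := by
  have hξ' : Measurable fun q : Ω × ℕ => ξ q.1 q.2 :=
    measurable_from_prod_countable_left fun m => measurable_pi_apply m |>.comp hξ
  exact measurable_pi_lambda _ fun n =>
    (hξ'.comp (measurable_id.prodMk (measurable_nth hB n))).div
      (measurable_thinningNormalizer hξ hB)

theorem measurable_centeredIndicator (hB : ∀ k, Measurable (B k)) :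
    Measurable (centeredIndicator p B) :=
  measurable_pi_lambda _ fun k =>
    (measurable_from_top (f := fun c : Bool => (if c then (1 : ℝ) else 0) - p)).comp (hB k)

end Measurability

section Bernoulli

variable {Ω : Type*} [MeasurableSpace Ω] {P : Measure Ω} {B : ℕ → Ω → Bool} {p : ℝ}

theorem indepFun_centeredIndicator {α : Type*} [MeasurableSpace α] {X : Ω → α}
    (hind : IndepFun X (fun ω k => B k ω) P) : IndepFun X (centeredIndicator p B) P :=
  hind.comp measurable_id <| measurable_pi_lambda _ fun k =>
    (measurable_from_top (f := fun c : Bool => (if c then (1 : ℝ) else 0) - p)).comp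
      (measurable_pi_apply k)

variable [IsProbabilityMeasure P]

theorem ae_infinite_setOf_of_iIndepFun (hB : ∀ k, Measurable (B k)) (hind : iIndepFun B P)
    (hsum : ∑' k, P {ω | B k ω = true} = ∞) : ∀ᵐ ω ∂P, {k | B k ω = true}.Infinite := by
  have hmeas (k : ℕ) : MeasurableSet {ω | B k ω = true} := hB k (measurableSet_singleton true)
  have hsets : iIndepSet (fun k => {ω | B k ω = true}) P :=
    (iIndepSet_iff_meas_biInter hmeas).2 fun s =>
      hind.meas_biInter fun k _ => ⟨{true}, trivial, rfl⟩
  have hlimsup := measure_limsup_eq_one hmeas hsets hsum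
  rw [← prob_compl_eq_zero_iff (MeasurableSet.measurableSet_limsup hmeas)] at hlimsup
  refine ae_iff.2 (measure_mono_null (fun ω hω => ?_) hlimsup)
  simpa [mem_limsup_iff_frequently_mem, Nat.frequently_atTop_iff_infinite] using hω

theorem integral_centeredIndicator (hB : Measurable (B k)) (hp : 0 ≤ p)
    (hlaw : P {ω | B k ω = true} = ENNReal.ofReal p) :
    ∫ ω, centeredIndicator p B ω k ∂P = 0 := by
  have hmeas : MeasurableSet {ω | B k ω = true} := hB (measurableSet_singleton true)
  have : (fun ω => if B k ω then (1 : ℝ) else 0) = {ω | B k ω = true}.indicator 1 := by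
    ext ω; simp [Set.indicator_apply]
  unfold centeredIndicator
  rw [integral_sub ?_ (integrable_const p), this, integral_indicator_one hmeas, measureReal_def,
    hlaw, ENNReal.toReal_ofReal hp]
  · simp
  · rw [this]
    exact (integrable_const (1 : ℝ)).indicator hmeas

theorem integral_centeredIndicator_mul (hB : ∀ k, Measurable (B k)) (hind : iIndepFun B P)
    (hp : 0 ≤ p) (hlaw : ∀ k, P {ω | B k ω = true} = ENNReal.ofReal p) (j k : ℕ) :
    ∫ ω, centeredIndicator p B ω j * centeredIndicator p B ω k ∂P =
      if j = k then p * (1 - p) else 0 := by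
  have hmean (k : ℕ) := integral_centeredIndicator (hB k) hp (hlaw k)
  have g_meas : Measurable fun b : Bool => (if b then (1 : ℝ) else 0) - p := measurable_from_top
  have hint (k : ℕ) : Integrable (fun ω => centeredIndicator p B ω k) P :=
    .of_bound (g_meas.comp (hB k)).aestronglyMeasurable (1 + |p|) (ae_of_all _ fun ω => by
      refine (norm_sub_le _ _).trans (add_le_add ?_ le_rfl)
      split_ifs <;> simp)
  split_ifs with hjk
  · subst hjk
    have hsq (ω : Ω) : centeredIndicator p B ω j * centeredIndicator p B ω j =
        (1 - 2 * p) * centeredIndicator p B ω j + p * (1 - p) := by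
      rw [centeredIndicator]
      split_ifs <;> ring
    simp_rw [hsq]
    rw [integral_add ((hint j).const_mul _) (integrable_const _), integral_const_mul, hmean]
    simp
  · refine (((hind.indepFun hjk).comp g_meas g_meas).integral_fun_mul_eq_mul_integral
      (hint j).aestronglyMeasurable (hint k).aestronglyMeasurable).trans ?_
    simp [← centeredIndicator.eq_def, hmean]

end Bernoulli

section Independence

variable {Ω : Type*} [MeasurableSpace Ω] {P : Measure Ω} {ξ ε : Ω → ℕ → ℝ}
  {φ : (ℕ → ℝ) → ℝ} {C v : ℝ}

theorem integral_comp_mul_comp_eq_mul (hξ : Measurable ξ) (hε : Measurable ε)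
    (hind : IndepFun ξ ε P) {f g : (ℕ → ℝ) → ℝ} (hf : Measurable f) (hg : Measurable g) :
    ∫ ω, f (ξ ω) * g (ε ω) ∂P = (∫ ω, f (ξ ω) ∂P) * ∫ ω, g (ε ω) ∂P :=
  (hind.comp hf hg).integral_fun_mul_eq_mul_integral (hf.comp hξ).aestronglyMeasurable
    (hg.comp hε).aestronglyMeasurable

variable [IsProbabilityMeasure P]

theorem tendsto_integral_mul_of_ae_tendsto {Y f : Ω → ℝ} {F : ℕ → Ω → ℝ} {C : ℝ}
    (hY : AEStronglyMeasurable Y P) (hYC : ∀ᵐ ω ∂P, ‖Y ω‖ ≤ C)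
    (hF : ∀ n, AEStronglyMeasurable (F n) P) (hF1 : ∀ᵐ ω ∂P, ∀ n, ‖F n ω‖ ≤ 1)
    (hlim : ∀ᵐ ω ∂P, Tendsto (F · ω) atTop (𝓝 (f ω))) :
    Tendsto (fun n => ∫ ω, Y ω * F n ω ∂P) atTop (𝓝 (∫ ω, Y ω * f ω ∂P)) := by
  refine tendsto_integral_of_dominated_convergence (fun _ => C) (fun n => hY.mul (hF n))
    (integrable_const C) (fun n => ?_) (hlim.mono fun ω h => h.const_mul (Y ω))
  filter_upwards [hYC, hF1] with ω hY hF
  simpa using norm_mul_le_of_le hY (hF n)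

theorem integral_mul_sum_range_mul_eq_zero (hξ : Measurable ξ) (hε : Measurable ε)
    (hind : IndepFun ξ ε P) (hφ : Measurable φ) (hφC : ∀ᵐ ω ∂P, ‖φ (ξ ω)‖ ≤ C)
    (hsub : ∀ᵐ ω ∂P, IsSubstochastic (ξ ω)) (hε1 : ∀ ω k, ‖ε ω k‖ ≤ 1)
    (hmean : ∀ k, ∫ ω, ε ω k ∂P = 0) (n : ℕ) :
    ∫ ω, φ (ξ ω) * ∑ k ∈ range n, ξ ω k * ε ω k ∂P = 0 := by
  have hterm (k : ℕ) : ∫ ω, φ (ξ ω) * ξ ω k * ε ω k ∂P = 0 := by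
    rw [integral_comp_mul_comp_eq_mul (f := fun x => φ x * x k) (g := fun e => e k) hξ hε hind
      (hφ.mul (measurable_pi_apply k)) (measurable_pi_apply k), hmean, mul_zero]
  have hint (k : ℕ) : Integrable (fun ω => φ (ξ ω) * ξ ω k * ε ω k) P := by
    refine .of_bound (by fun_prop) C ?_
    filter_upwards [hφC, hsub] with ω hφω hξω
    simpa using norm_mul_le_of_le (norm_mul_le_of_le hφω (hξω.norm_le_one k)) (hε1 ω k)
  simp_rw [mul_sum, ← mul_assoc]
  rw [integral_finsetSum _ fun k _ => hint k]
  simp [hterm]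

theorem integral_mul_sum_range_mul_sq (hξ : Measurable ξ) (hε : Measurable ε)
    (hind : IndepFun ξ ε P) (hφ : Measurable φ) (hφC : ∀ᵐ ω ∂P, ‖φ (ξ ω)‖ ≤ C)
    (hsub : ∀ᵐ ω ∂P, IsSubstochastic (ξ ω)) (hε1 : ∀ ω k, ‖ε ω k‖ ≤ 1)
    (hcov : ∀ j k, ∫ ω, ε ω j * ε ω k ∂P = if j = k then v else 0) (n : ℕ) :
    ∫ ω, φ (ξ ω) * (∑ k ∈ range n, ξ ω k * ε ω k) ^ 2 ∂P =
      v * ∫ ω, φ (ξ ω) * ∑ k ∈ range n, ξ ω k ^ 2 ∂P := by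
  have hterm (j k : ℕ) : ∫ ω, φ (ξ ω) * (ξ ω j * ξ ω k) * (ε ω j * ε ω k) ∂P =
      if j = k then v * ∫ ω, φ (ξ ω) * ξ ω k ^ 2 ∂P else 0 := by
    rw [integral_comp_mul_comp_eq_mul (f := fun x => φ x * (x j * x k))
      (g := fun e => e j * e k) hξ hε hind (by fun_prop) (by fun_prop), hcov]
    split_ifs with hjk
    · subst hjk; simp only [← sq, mul_comm]
    · rw [mul_zero]
  have hint (j k : ℕ) : Integrable (fun ω => φ (ξ ω) * (ξ ω j * ξ ω k) * (ε ω j * ε ω k)) P := by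
    refine .of_bound (by fun_prop) C ?_
    filter_upwards [hφC, hsub] with ω hφω hξω
    simpa using norm_mul_le_of_le (norm_mul_le_of_le hφω
      (norm_mul_le_of_le (hξω.norm_le_one j) (hξω.norm_le_one k)))
      (norm_mul_le_of_le (hε1 ω j) (hε1 ω k))
  have hint2 (k : ℕ) : Integrable (fun ω => φ (ξ ω) * ξ ω k ^ 2) P := by
    refine .of_bound (by fun_prop) C ?_
    filter_upwards [hφC, hsub] with ω hφω hξω
    simpa using norm_mul_le_of_le hφω (hξω.sq.norm_le_one k)
  have hexpand (ω : Ω) : φ (ξ ω) * (∑ k ∈ range n, ξ ω k * ε ω k) ^ 2 =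
      ∑ j ∈ range n, ∑ k ∈ range n, φ (ξ ω) * (ξ ω j * ξ ω k) * (ε ω j * ε ω k) := by
    simp_rw [sq, sum_mul_sum, mul_sum]
    exact sum_congr rfl fun j _ => sum_congr rfl fun k _ => by ring
  simp_rw [hexpand, mul_sum]
  rw [integral_finsetSum _ fun j _ => integrable_finsetSum _ fun k _ => hint j k,
    integral_finsetSum _ fun k _ => hint2 k, mul_sum]
  simp_rw [integral_finsetSum _ fun k _ => hint _ k, hterm, sum_ite_eq]
  exact sum_congr rfl fun k hk => if_pos hk

theorem integral_mul_tsum_mul_eq_zero (hξ : Measurable ξ) (hε : Measurable ε)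
    (hind : IndepFun ξ ε P) (hφ : Measurable φ) (hφC : ∀ᵐ ω ∂P, ‖φ (ξ ω)‖ ≤ C)
    (hsub : ∀ᵐ ω ∂P, IsSubstochastic (ξ ω)) (hε1 : ∀ ω k, ‖ε ω k‖ ≤ 1)
    (hmean : ∀ k, ∫ ω, ε ω k ∂P = 0) :
    ∫ ω, φ (ξ ω) * ∑' k, ξ ω k * ε ω k ∂P = 0 := by
  refine tendsto_nhds_unique
    (tendsto_integral_mul_of_ae_tendsto (hφ.comp hξ).aestronglyMeasurable hφC
      (fun n => by fun_prop) (hsub.mono fun ω h n => h.norm_sum_range_mul_le_one (hε1 ω) n)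
      (hsub.mono fun ω h => (h.summable_mul (hε1 ω)).hasSum.tendsto_sum_nat)) ?_
  simp_rw [integral_mul_sum_range_mul_eq_zero hξ hε hind hφ hφC hsub hε1 hmean]
  exact tendsto_const_nhds

theorem integral_mul_tsum_mul_sq (hξ : Measurable ξ) (hε : Measurable ε)
    (hind : IndepFun ξ ε P) (hφ : Measurable φ) (hφC : ∀ᵐ ω ∂P, ‖φ (ξ ω)‖ ≤ C)
    (hsub : ∀ᵐ ω ∂P, IsSubstochastic (ξ ω)) (hε1 : ∀ ω k, ‖ε ω k‖ ≤ 1)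
    (hcov : ∀ j k, ∫ ω, ε ω j * ε ω k ∂P = if j = k then v else 0) :
    ∫ ω, φ (ξ ω) * (∑' k, ξ ω k * ε ω k) ^ 2 ∂P = v * ∫ ω, φ (ξ ω) * ∑' k, ξ ω k ^ 2 ∂P := by
  have hlhs := tendsto_integral_mul_of_ae_tendsto (hφ.comp hξ).aestronglyMeasurable hφC
    (F := fun n ω => (∑ k ∈ range n, ξ ω k * ε ω k) ^ 2) (fun n => by fun_prop)
    (hsub.mono fun ω h n => by
      simpa using pow_le_one₀ (norm_nonneg _) (h.norm_sum_range_mul_le_one (hε1 ω) n) (n := 2))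
    (hsub.mono fun ω h => ((h.summable_mul (hε1 ω)).hasSum.tendsto_sum_nat).pow 2)
  have hrhs := tendsto_integral_mul_of_ae_tendsto (hφ.comp hξ).aestronglyMeasurable hφC
    (F := fun n ω => ∑ k ∈ range n, ξ ω k ^ 2) (fun n => by fun_prop)
    (hsub.mono fun ω h n => by
      rw [Real.norm_of_nonneg (sum_nonneg fun k _ => h.sq.nonneg k)]
      exact h.sq.sum_range_le_one n)
    (hsub.mono fun _ h => h.sq.summable.hasSum.tendsto_sum_nat)
  exact tendsto_nhds_unique
    (hlhs.congr (integral_mul_sum_range_mul_sq hξ hε hind hφ hφC hsub hε1 hcov)) (hrhs.const_mul v)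

end Independence

section Thinning

variable {Ω : Type*} [MeasurableSpace Ω] {P : Measure Ω} [IsProbabilityMeasure P]
  {p : ℝ} {ξ : Ω → ℕ → ℝ} {B : ℕ → Ω → Bool}

theorem div_add_div_sub_two_mul_eq {c d z : ℝ} (hc : c ≠ 0) (hz : z ≠ 0) :
    c * d / z + d * z / c - 2 * d = d * (z - c) ^ 2 / (c * z) := by
  field_simp
  ring

-- Integrate `c D / Z + D Z / c - 2 D = D (Z - c)² / (c Z) ≥ 0` (AM-GM).
theorem ae_eq_of_integral_div_le_of_integral_mul_eq {D Z : Ω → ℝ} {c : ℝ} (hc : 0 < c)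
    (hD : Measurable D) (hZ : Measurable Z)
    (hD0 : ∀ᵐ ω ∂P, 0 ≤ D ω) (hDZ : ∀ᵐ ω ∂P, c * D ω ≤ Z ω)
    (hDint : Integrable D P) (hDZint : Integrable (fun ω => D ω * Z ω) P)
    (hdiv : ∫ ω, c * D ω / Z ω ∂P ≤ ∫ ω, D ω ∂P) (hmul : ∫ ω, D ω * Z ω ∂P = c * ∫ ω, D ω ∂P) :
    ∀ᵐ ω ∂P, 0 < D ω → Z ω = c := by
  have hdivint : Integrable (fun ω => c * D ω / Z ω) P := by
    refine .of_bound ((hD.const_mul c).div hZ).aestronglyMeasurable 1 ?_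
    filter_upwards [hD0, hDZ] with ω hd hdz
    have hz : 0 ≤ Z ω := le_trans (by positivity) hdz
    rw [Real.norm_of_nonneg (by positivity)]
    exact div_le_one_of_le₀ hdz hz
  have hGint : Integrable (fun ω => c * D ω / Z ω + D ω * Z ω / c - 2 * D ω) P :=
    (hdivint.add (hDZint.div_const c)).sub (hDint.const_mul 2)
  have hG_eq : ∀ᵐ ω ∂P,
      c * D ω / Z ω + D ω * Z ω / c - 2 * D ω = D ω * (Z ω - c) ^ 2 / (c * Z ω) := by
    filter_upwards [hD0, hDZ] with ω hd hdz
    rcases hd.eq_or_lt with h | h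
    · simp [← h]
    · exact div_add_div_sub_two_mul_eq hc.ne' (by nlinarith)
  have hG0 : ∀ᵐ ω ∂P, 0 ≤ c * D ω / Z ω + D ω * Z ω / c - 2 * D ω := by
    filter_upwards [hG_eq, hD0, hDZ] with ω h hd hdz
    have : 0 ≤ Z ω := le_trans (by positivity) hdz
    rw [h]
    positivity
  have hG_integral : ∫ ω, c * D ω / Z ω + D ω * Z ω / c - 2 * D ω ∂P = 0 := by
    refine le_antisymm ?_ (integral_nonneg_of_ae hG0)
    rw [integral_sub (f := fun ω => c * D ω / Z ω + D ω * Z ω / c)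
      (hdivint.add (hDZint.div_const c)) (hDint.const_mul 2),
      integral_add hdivint (hDZint.div_const c), integral_div, integral_const_mul, hmul,
      mul_div_cancel_left₀ _ hc.ne']
    linarith
  filter_upwards [(integral_eq_zero_iff_of_nonneg_ae hG0 hGint).1 hG_integral, hG_eq, hDZ]
    with ω hG hGω hdz hd
  have hz : 0 < Z ω := by nlinarith
  have : D ω * (Z ω - c) ^ 2 = 0 := by
    simpa [hGω, hc.ne', hz.ne'] using hG
  simpa [hd.ne', sub_eq_zero] using this

theorem integrable_dust_comp (hξ : Measurable ξ) (hsub : ∀ᵐ ω ∂P, IsSubstochastic (ξ ω)) :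
    Integrable (fun ω => dust (ξ ω)) P :=
  .of_bound (measurable_dust.comp hξ).aestronglyMeasurable 1
    (hsub.mono fun _ h => h.norm_dust_le_one)

theorem integral_mul_dust_div_le_of_map_thinning_eq (hp : 0 ≤ p) (hξ : Measurable ξ)
    (hB : ∀ k, Measurable (B k)) (hsub : ∀ᵐ ω ∂P, IsSubstochastic (ξ ω))
    (hinf : ∀ᵐ ω ∂P, {k | B k ω = true}.Infinite)
    (hlaw : P.map (fun ω => thinning p (ξ ω) (fun k => B k ω)) = P.map ξ) :
    ∫ ω, p * dust (ξ ω) / thinningNormalizer p (ξ ω) (fun k => B k ω) ∂P ≤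
      ∫ ω, dust (ξ ω) ∂P := by
  have hthin : IdentDistrib (fun ω => thinning p (ξ ω) (fun k => B k ω)) ξ P P :=
    ⟨(measurable_thinning hξ hB).aemeasurable, hξ.aemeasurable, hlaw⟩
  have hdust := hthin.comp measurable_dust
  rw [← show ∫ ω, dust (thinning p (ξ ω) (fun k => B k ω)) ∂P = ∫ ω, dust (ξ ω) ∂P from
    hdust.integral_eq]
  refine integral_mono_of_nonneg (hsub.mono fun ω h => ?_)
    (hdust.integrable_iff.2 (integrable_dust_comp hξ hsub))
    (by filter_upwards [hsub, hinf] with ω h hω using h.mul_dust_div_le_dust_thinning hp hω)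
  exact div_nonneg (mul_nonneg hp h.dust_nonneg) (h.thinningNormalizer_nonneg hp)

theorem integrable_dust_mul_thinningNormalizer (hp₀ : 0 ≤ p) (hp₁ : p ≤ 1) (hξ : Measurable ξ)
    (hB : ∀ k, Measurable (B k)) (hsub : ∀ᵐ ω ∂P, IsSubstochastic (ξ ω)) :
    Integrable (fun ω => dust (ξ ω) * thinningNormalizer p (ξ ω) (fun k => B k ω)) P := by
  refine .of_bound ((measurable_dust.comp hξ).mul
    (measurable_thinningNormalizer hξ hB)).aestronglyMeasurable 1 ?_
  filter_upwards [hsub] with ω h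
  simpa using norm_mul_le_of_le h.norm_dust_le_one (h.norm_thinningNormalizer_le_one hp₀ hp₁)

theorem integral_dust_mul_thinningNormalizer (hp₀ : 0 ≤ p) (hp₁ : p ≤ 1) (hξ : Measurable ξ)
    (hB : ∀ k, Measurable (B k)) (hBlaw : ∀ k, P {ω | B k ω = true} = ENNReal.ofReal p)
    (hIndep : IndepFun ξ (fun ω k => B k ω) P) (hsub : ∀ᵐ ω ∂P, IsSubstochastic (ξ ω)) :
    ∫ ω, dust (ξ ω) * thinningNormalizer p (ξ ω) (fun k => B k ω) ∂P =
      p * ∫ ω, dust (ξ ω) ∂P := by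
  set M := fun ω => ∑' k, ξ ω k * centeredIndicator p B ω k
  have hDZint := integrable_dust_mul_thinningNormalizer (P := P) hp₀ hp₁ hξ hB hsub
  have hsplit : (fun ω => dust (ξ ω) * thinningNormalizer p (ξ ω) (fun k => B k ω)) =ᵐ[P]
      fun ω => p * dust (ξ ω) + dust (ξ ω) * M ω :=
    hsub.mono fun ω h => by simp only [h.thinningNormalizer_eq_add_tsum, M, centeredIndicator]; ring
  have hDMint : Integrable (fun ω => dust (ξ ω) * M ω) P :=
    (hDZint.sub ((integrable_dust_comp hξ hsub).const_mul p)).congr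
      (hsplit.mono fun ω h => by simp [h])
  rw [integral_congr_ae hsplit, integral_add ((integrable_dust_comp hξ hsub).const_mul p) hDMint,
    integral_const_mul, integral_mul_tsum_mul_eq_zero hξ (measurable_centeredIndicator hB)
      (indepFun_centeredIndicator hIndep) measurable_dust (hsub.mono fun _ h => h.norm_dust_le_one)
      hsub (norm_centeredIndicator_le_one hp₀ hp₁)
      fun k => integral_centeredIndicator (hB k) hp₀ (hBlaw k),
    add_zero]

theorem ae_dust_mul_tsum_sq_eq_zero (hp₀ : 0 < p) (hp₁ : p < 1) (hξ : Measurable ξ)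
    (hB : ∀ k, Measurable (B k)) (hBindep : iIndepFun B P)
    (hBlaw : ∀ k, P {ω | B k ω = true} = ENNReal.ofReal p)
    (hIndep : IndepFun ξ (fun ω k => B k ω) P) (hsub : ∀ᵐ ω ∂P, IsSubstochastic (ξ ω))
    (hdiv : ∫ ω, p * dust (ξ ω) / thinningNormalizer p (ξ ω) (fun k => B k ω) ∂P ≤
      ∫ ω, dust (ξ ω) ∂P) :
    ∀ᵐ ω ∂P, dust (ξ ω) * ∑' k, ξ ω k ^ 2 = 0 := by
  set M := fun ω => ∑' k, ξ ω k * centeredIndicator p B ω k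
  have hZp : ∀ᵐ ω ∂P, 0 < dust (ξ ω) → thinningNormalizer p (ξ ω) (fun k => B k ω) = p :=
    ae_eq_of_integral_div_le_of_integral_mul_eq hp₀ (measurable_dust.comp hξ)
      (measurable_thinningNormalizer hξ hB) (hsub.mono fun _ h => h.dust_nonneg)
      (hsub.mono fun _ h => h.mul_dust_le_thinningNormalizer) (integrable_dust_comp hξ hsub)
      (integrable_dust_mul_thinningNormalizer hp₀.le hp₁.le hξ hB hsub) hdiv
      (integral_dust_mul_thinningNormalizer hp₀.le hp₁.le hξ hB hBlaw hIndep hsub)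
  have hDM : ∫ ω, dust (ξ ω) * M ω ^ 2 ∂P = 0 := by
    refine integral_eq_zero_of_ae ?_
    filter_upwards [hZp, hsub] with ω hZp h
    rcases h.dust_nonneg.eq_or_lt with h0 | h0
    · simp [← h0]
    · have hM : M ω = 0 := by
        have := h.thinningNormalizer_eq_add_tsum (p := p) (b := fun k => B k ω)
        simp only [M, centeredIndicator]
        linarith [hZp h0]
      simp [hM]
  rw [integral_mul_tsum_mul_sq hξ (measurable_centeredIndicator hB)
    (indepFun_centeredIndicator hIndep) measurable_dust (hsub.mono fun _ h => h.norm_dust_le_one)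
    hsub (norm_centeredIndicator_le_one hp₀.le hp₁.le)
    (integral_centeredIndicator_mul hB hBindep hp₀.le hBlaw), mul_eq_zero] at hDM
  have hDT := hDM.resolve_left (mul_ne_zero hp₀.ne' (sub_ne_zero.2 hp₁.ne'))
  have hT (k : ℕ) : Measurable fun ω => ξ ω k ^ 2 := (measurable_pi_apply k |>.comp hξ).pow_const 2
  refine (integral_eq_zero_iff_of_nonneg_ae (hsub.mono fun ω h => ?_) ?_).1 hDT
  · exact mul_nonneg h.dust_nonneg (tsum_nonneg h.sq.nonneg)
  refine .of_bound ((measurable_dust.comp hξ).mul (Measurable.tsum hT)).aestronglyMeasurable 1 ?_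
  filter_upwards [hsub] with ω h
  simpa using norm_mul_le_of_le h.norm_dust_le_one h.sq.norm_tsum_le_one

end Thinning

/-- A thinning invariant random partition structure has an amount of dust in
`{0,1}` almost surely: if `ξ` is a random element of `Δ_∞`, `(B k)` are i.i.d.
Bernoulli(`p`) independent of `ξ`, `Z' = p ξ₀ + ∑ₖ B_k ξ_k`, `K₀ < K₁ < …`
enumerates `{k : B_k = 1}` and `ζ n = ξ_{K n} / Z'`, and if `ζ` has the same law
as `ξ`, then `ξ₀ = 1 - ∑ₙ ξₙ ∈ {0,1}` almost surely. -/
theorem thinning_invariant_dust_zero_or_one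
    (p : ℝ) (hp : p ∈ Set.Ioo (0 : ℝ) 1)
    (Ω : Type*) [MeasurableSpace Ω] (P : Measure Ω) [IsProbabilityMeasure P]
    (ξ : Ω → ℕ → ℝ) (hξmeas : Measurable ξ)
    (hξΔ : ∀ᵐ ω ∂P, Antitone (ξ ω) ∧ (∀ n, 0 ≤ ξ ω n) ∧ Summable (ξ ω) ∧
      (∑' n, ξ ω n) ≤ 1 ∧
      (0 < 1 - ∑' n, ξ ω n ∨ {n : ℕ | 0 < ξ ω n}.Infinite))
    (B : ℕ → Ω → Bool) (hBmeas : ∀ k, Measurable (B k))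
    (hBindep : iIndepFun B P)
    (hBlaw : ∀ k, P {ω | B k ω = true} = ENNReal.ofReal p)
    (hIndep : IndepFun ξ (fun ω k => B k ω) P)
    (hlaw :
      Measure.map
        (fun ω n => ξ ω (Nat.nth (fun k => B k ω = true) n) /
          (p * (1 - ∑' n, ξ ω n) + ∑' k, (if B k ω then ξ ω k else 0))) P
      = Measure.map ξ P) :
    ∀ᵐ ω ∂P, (1 - ∑' n, ξ ω n = 0) ∨ (1 - ∑' n, ξ ω n = 1) := by
  have hsub : ∀ᵐ ω ∂P, IsSubstochastic (ξ ω) :=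
    hξΔ.mono fun ω h => ⟨h.2.1, h.2.2.1, h.2.2.2.1⟩
  have hinf : ∀ᵐ ω ∂P, {k | B k ω = true}.Infinite :=
    ae_infinite_setOf_of_iIndepFun hBmeas hBindep (by simp [hBlaw, hp.1])
  have hdiv := integral_mul_dust_div_le_of_map_thinning_eq hp.1.le hξmeas hBmeas hsub hinf hlaw
  filter_upwards [hsub,
    ae_dust_mul_tsum_sq_eq_zero hp.1 hp.2 hξmeas hBmeas hBindep hBlaw hIndep hsub hdiv]
    with ω hsubω hω
  exact hsubω.dust_eq_zero_or_one_of_mul_tsum_sq_eq_zero hω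
end
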